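/- arXiv:1805.02593 — 5 statements merged into one kernel-verified Lean document; each statement's English description precedes it below -/
import Mathlib

section
/- For $0 < H \leq 1$, the kernel $C^H(s,t) = \frac{1}{2}(|s|^{2H} + |t|^{2H} - |s-t|^{2H})$ on $\mathbb{R}$ is positive (semi)definite: for all $t_1,\dots,t_n \in \mathbb{R}$ and $c_1,\dots,c_n \in \mathbb{C}$ one has $\sum_{j,k} c_j \overline{c_k} C^H(t_j,t_k) \geq 0$. -/
/-- Covariance kernel of fractional Brownian motion with Hurst index `H`. -/
noncomputable def fbmKernel (H s t : ℝ) : ℝ :=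
  (|s| ^ (2 * H) + |t| ^ (2 * H) - |s - t| ^ (2 * H)) / 2

/-!
A function `ψ` with `ψ 0 ≥ 0` and `ψ (-x) = ψ x` is conditionally negative definite exactly when
`ψ s + ψ t - ψ (s - t)` is a positive semidefinite kernel: adjoin the point `0` with weight `-∑ aᵢ`.
So it suffices that `x ↦ |x| ^ α` is conditionally negative definite for `0 < α ≤ 2`. For `α = 2`
this is the identity `∑ bⱼ bₖ (sⱼ - sₖ)² = -2 (∑ bᵢ sᵢ)²` when `∑ bᵢ = 0`. For `α < 2`, scaling
gives `|x| ^ α = c⁻¹ ∫₀^∞ (1 - cos (x u)) u^(-1-α) du` with `c > 0`, and each `x ↦ 1 - cos (x u)` is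
conditionally negative definite since `∑ bⱼ bₖ cos ((sⱼ - sₖ) u) = |∑ bⱼ e^(i sⱼ u)|²`.
Real symmetric kernels that are positive semidefinite for real weights are so for complex weights.
-/

open MeasureTheory Real Set Finset

def CondNegDef {G : Type*} [AddGroup G] (ψ : G → ℝ) : Prop :=
  ∀ (ι : Type) [Fintype ι] (s : ι → G) (b : ι → ℝ),
    ∑ i, b i = 0 → ∑ j, ∑ k, b j * b k * ψ (s j - s k) ≤ 0

namespace CondNegDef

variable {G : Type*} [AddGroup G] {ψ : G → ℝ}

theorem const_mul (h : CondNegDef ψ) {c : ℝ} (hc : 0 ≤ c) : CondNegDef (fun x => c * ψ x) := by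
  intro ι _ s b hb
  have hsum : ∑ j, ∑ k, b j * b k * (c * ψ (s j - s k))
      = c * ∑ j, ∑ k, b j * b k * ψ (s j - s k) := by
    simp only [mul_sum]; congr! 2; ring
  rw [hsum]
  exact mul_nonpos_of_nonneg_of_nonpos hc (h ι s b hb)

theorem integral {α : Type*} [MeasurableSpace α] {μ : Measure α} {f : G → α → ℝ}
    (hf : ∀ x, Integrable (f x) μ) (h : ∀ᵐ u ∂μ, CondNegDef (f · u)) :
    CondNegDef (fun x => ∫ u, f x u ∂μ) := by
  intro ι _ s b hb
  have hsum : ∑ j, ∑ k, b j * b k * ∫ u, f (s j - s k) u ∂μ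
      = ∫ u, ∑ j, ∑ k, b j * b k * f (s j - s k) u ∂μ := by
    rw [integral_finsetSum _ fun j _ => integrable_finsetSum _ fun k _ => (hf _).const_mul _]
    congr! 1 with j
    rw [integral_finsetSum _ fun k _ => (hf _).const_mul _]
    simp only [integral_const_mul]
  rw [hsum]
  exact integral_nonpos_of_ae (h.mono fun u hu => hu ι s b hb)

end CondNegDef

theorem CondNegDef.sum_mul_mul_add_sub_nonneg {G : Type*} [AddCommGroup G] {ψ : G → ℝ}
    (h : CondNegDef ψ) (h0 : 0 ≤ ψ 0) (hneg : ∀ x, ψ (-x) = ψ x)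
    {ι : Type} [Fintype ι] (t : ι → G) (a : ι → ℝ) :
    0 ≤ ∑ j, ∑ k, a j * a k * (ψ (t j) + ψ (t k) - ψ (t j - t k)) := by
  set σ := ∑ i, a i
  set T := ∑ i, a i * ψ (t i)
  set P := ∑ j, ∑ k, a j * a k * ψ (t j - t k)
  have hadjoin := h (Option ι) (fun i => i.elim 0 t) (fun i => i.elim (-σ) a)
    (by simp [Fintype.sum_option, σ])
  have hT₁ : ∑ i, σ * a i * ψ (t i) = σ * T := by
    rw [mul_sum]; exact sum_congr rfl fun i _ => by ring
  have hT₂ : ∑ i, a i * σ * ψ (t i) = σ * T := by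
    rw [mul_sum]; exact sum_congr rfl fun i _ => by ring
  simp only [Fintype.sum_option, Option.elim_none, Option.elim_some, zero_sub, sub_zero,
    hneg, neg_mul, mul_neg, sum_neg_distrib, sum_add_distrib, hT₁, hT₂] at hadjoin
  have hsum : ∑ j, ∑ k, a j * a k * (ψ (t j) + ψ (t k) - ψ (t j - t k)) = T * σ + σ * T - P := by
    rw [sum_mul_sum, sum_mul_sum]
    simp only [P, ← sum_add_distrib, ← sum_sub_distrib]
    exact sum_congr rfl fun j _ => sum_congr rfl fun k _ => by ring
  rw [hsum]
  nlinarith [sq_nonneg σ]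

theorem condNegDef_sq : CondNegDef (fun x : ℝ => x ^ 2) := by
  intro ι _ s b hb
  have hsum : ∑ j, ∑ k, b j * b k * (s j - s k) ^ 2
      = (∑ i, b i) * (∑ i, b i * s i ^ 2) + (∑ i, b i * s i ^ 2) * (∑ i, b i)
        - 2 * ((∑ i, b i * s i) * (∑ i, b i * s i)) := by
    rw [sum_mul_sum, sum_mul_sum, sum_mul_sum]
    simp only [mul_sum, ← sum_add_distrib, ← sum_sub_distrib]
    refine sum_congr rfl fun j _ => sum_congr rfl fun k _ => ?_
    ring
  rw [hsum, hb]
  nlinarith [sq_nonneg (∑ i, b i * s i)]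

theorem condNegDef_one_sub_cos_mul (u : ℝ) : CondNegDef (fun x : ℝ => 1 - cos (x * u)) := by
  intro ι _ s b hb
  have hsum : ∑ j, ∑ k, b j * b k * (1 - cos ((s j - s k) * u))
      = (∑ i, b i) ^ 2 - (∑ i, b i * cos (s i * u)) ^ 2 - (∑ i, b i * sin (s i * u)) ^ 2 := by
    simp only [pow_two, sum_mul_sum, ← sum_sub_distrib]
    refine sum_congr rfl fun j _ => sum_congr rfl fun k _ => ?_
    rw [sub_mul, cos_sub]
    ring
  rw [hsum, hb]
  nlinarith [sq_nonneg (∑ i, b i * cos (s i * u)), sq_nonneg (∑ i, b i * sin (s i * u))]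
theorem integrableOn_rpow_mul_one_sub_cos_mul {α : ℝ} (hα0 : 0 < α) (hα2 : α < 2) (x : ℝ) :
    IntegrableOn (fun u => u ^ (-1 - α) * (1 - cos (x * u))) (Ioi 0) := by
  have hmeas : AEStronglyMeasurable (fun u : ℝ => u ^ (-1 - α) * (1 - cos (x * u))) volume :=
    (by fun_prop : Measurable fun u : ℝ => u ^ (-1 - α) * (1 - cos (x * u))).aestronglyMeasurable
  have hnorm : ∀ u : ℝ, 0 < u →
      ‖u ^ (-1 - α) * (1 - cos (x * u))‖ = u ^ (-1 - α) * (1 - cos (x * u)) := fun u hu =>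
    Real.norm_of_nonneg (mul_nonneg (rpow_nonneg hu.le _) (by linarith [cos_le_one (x * u)]))
  have hnear : IntegrableOn (fun u => u ^ (-1 - α) * (1 - cos (x * u))) (Ioc 0 1) := by
    have hdom : IntegrableOn (fun u : ℝ => x ^ 2 / 2 * u ^ (1 - α)) (Ioc 0 1) :=
      ((intervalIntegral.intervalIntegrable_rpow' (by linarith)).1).const_mul _
    refine hdom.mono' hmeas.restrict ((ae_restrict_mem measurableSet_Ioc).mono fun u hu => ?_)
    rw [hnorm u hu.1]
    calc u ^ (-1 - α) * (1 - cos (x * u)) ≤ u ^ (-1 - α) * ((x * u) ^ 2 / 2) := by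
          have := one_sub_sq_div_two_le_cos (x := x * u)
          exact mul_le_mul_of_nonneg_left (by linarith) (rpow_nonneg hu.1.le _)
      _ = x ^ 2 / 2 * (u ^ (-1 - α) * u ^ (2 : ℝ)) := by rw [rpow_two]; ring
      _ = x ^ 2 / 2 * u ^ (1 - α) := by rw [← rpow_add hu.1]; ring_nf
  have hfar : IntegrableOn (fun u => u ^ (-1 - α) * (1 - cos (x * u))) (Ioi 1) := by
    have hdom : IntegrableOn (fun u : ℝ => u ^ (-1 - α) * 2) (Ioi 1) :=
      (integrableOn_Ioi_rpow_of_lt (by linarith) one_pos).mul_const 2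
    refine hdom.mono' hmeas.restrict ((ae_restrict_mem measurableSet_Ioi).mono fun u hu => ?_)
    have hu : (0 : ℝ) < u := one_pos.trans hu
    rw [hnorm u hu]
    gcongr
    linarith [neg_one_le_cos (x * u)]
  simpa [Ioc_union_Ioi_eq_Ioi zero_le_one] using hnear.union hfar

theorem integral_rpow_mul_one_sub_cos_pos {α : ℝ} (hα0 : 0 < α) (hα2 : α < 2) :
    0 < ∫ u in Ioi (0 : ℝ), u ^ (-1 - α) * (1 - cos u) := by
  have hnonneg : 0 ≤ᵐ[volume.restrict (Ioi 0)] fun u : ℝ => u ^ (-1 - α) * (1 - cos u) :=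
    (ae_restrict_mem measurableSet_Ioi).mono fun u hu =>
      mul_nonneg (rpow_nonneg (le_of_lt hu) _) (by linarith [cos_le_one u])
  rw [setIntegral_pos_iff_support_of_nonneg_ae hnonneg
    (by simpa using integrableOn_rpow_mul_one_sub_cos_mul hα0 hα2 1)]
  have hsupp :
      Ioo (π / 2) π ⊆ Function.support (fun u : ℝ => u ^ (-1 - α) * (1 - cos u)) ∩ Ioi 0 := by
    intro u ⟨hu₁, hu₂⟩
    have hu : 0 < u := by linarith [pi_pos]
    have hcos : cos u ≤ 0 := cos_nonpos_of_pi_div_two_le_of_le hu₁.le (by linarith [pi_pos])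
    exact ⟨(mul_pos (rpow_pos_of_pos hu _) (by linarith)).ne', hu⟩
  refine lt_of_lt_of_le ?_ (measure_mono hsupp)
  simp [pi_pos]

theorem integral_rpow_mul_one_sub_cos_mul {α : ℝ} (hα0 : 0 < α) (x : ℝ) :
    ∫ u in Ioi (0 : ℝ), u ^ (-1 - α) * (1 - cos (x * u))
      = |x| ^ α * ∫ u in Ioi (0 : ℝ), u ^ (-1 - α) * (1 - cos u) := by
  rcases eq_or_ne x 0 with rfl | hx
  · simp [zero_rpow hα0.ne']
  have hx' : 0 < |x| := abs_pos.mpr hx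
  have hcongr : ∫ u in Ioi (0 : ℝ), u ^ (-1 - α) * (1 - cos (x * u))
      = ∫ u in Ioi (0 : ℝ), |x| ^ (1 + α) * ((|x| * u) ^ (-1 - α) * (1 - cos (|x| * u))) := by
    refine setIntegral_congr_fun measurableSet_Ioi fun u (hu : 0 < u) => ?_
    have hcos : cos (|x| * u) = cos (x * u) := by
      rw [← cos_abs (x * u), abs_mul, abs_of_pos hu]
    rw [hcos, mul_rpow hx'.le hu.le, ← mul_assoc, ← mul_assoc, ← rpow_add hx']
    norm_num
  rw [hcongr, integral_const_mul,
    integral_comp_mul_left_Ioi (fun v => v ^ (-1 - α) * (1 - cos v)) 0 hx',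
    mul_zero, smul_eq_mul, ← mul_assoc, ← rpow_neg_one, ← rpow_add hx']
  norm_num

theorem condNegDef_abs_rpow {α : ℝ} (hα0 : 0 < α) (hα2 : α ≤ 2) :
    CondNegDef (fun x : ℝ => |x| ^ α) := by
  rcases hα2.lt_or_eq with hα2 | rfl
  · have hI := integral_rpow_mul_one_sub_cos_pos hα0 hα2
    have hrepr : (fun x : ℝ => |x| ^ α) = fun x =>
        (∫ u in Ioi (0 : ℝ), u ^ (-1 - α) * (1 - cos u))⁻¹ * ∫ u in Ioi (0 : ℝ), u ^ (-1 - α) * (1 - cos (x * u)) := by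
      funext x
      rw [integral_rpow_mul_one_sub_cos_mul hα0, mul_comm (|x| ^ α), inv_mul_cancel_left₀ hI.ne']
    rw [hrepr]
    refine CondNegDef.const_mul (CondNegDef.integral
      (integrableOn_rpow_mul_one_sub_cos_mul hα0 hα2) ?_) (inv_nonneg.2 hI.le)
    filter_upwards [ae_restrict_mem measurableSet_Ioi] with u hu
    exact (condNegDef_one_sub_cos_mul u).const_mul (rpow_nonneg (le_of_lt hu) _)
  · simpa [rpow_two, sq_abs] using condNegDef_sq

open ComplexConjugate ComplexOrder in
theorem sum_mul_conj_mul_ofReal_nonneg {ι : Type*} [Fintype ι] {K : ι → ι → ℝ}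
    (hK : ∀ j k, K j k = K k j) (hpos : ∀ a : ι → ℝ, 0 ≤ ∑ j, ∑ k, a j * a k * K j k)
    (c : ι → ℂ) :
    0 ≤ ∑ j, ∑ k, c j * conj (c k) * (K j k : ℂ) := by
  have hre : (∑ j, ∑ k, c j * conj (c k) * (K j k : ℂ)).re
      = ∑ j, ∑ k, (c j).re * (c k).re * K j k + ∑ j, ∑ k, (c j).im * (c k).im * K j k := by
    simp only [Complex.re_sum, ← sum_add_distrib]
    refine sum_congr rfl fun j _ => sum_congr rfl fun k _ => ?_
    simp only [Complex.mul_re, Complex.mul_im, Complex.conj_re, Complex.conj_im,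
      Complex.ofReal_re, Complex.ofReal_im]
    ring
  have him : (∑ j, ∑ k, c j * conj (c k) * (K j k : ℂ)).im
      = ∑ j, ∑ k, (c j).im * (c k).re * K j k - ∑ j, ∑ k, (c j).re * (c k).im * K j k := by
    simp only [Complex.im_sum, ← sum_sub_distrib]
    refine sum_congr rfl fun j _ => sum_congr rfl fun k _ => ?_
    simp only [Complex.mul_re, Complex.mul_im, Complex.conj_re, Complex.conj_im,
      Complex.ofReal_re, Complex.ofReal_im]
    ring
  have hswap : ∑ j, ∑ k, (c j).re * (c k).im * K j k = ∑ j, ∑ k, (c j).im * (c k).re * K j k := by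
    rw [sum_comm]
    exact sum_congr rfl fun j _ => sum_congr rfl fun k _ => by rw [hK]; ring
  rw [Complex.le_def, hre, him, hswap, sub_self]
  exact ⟨add_nonneg (hpos _) (hpos _), rfl⟩

open scoped ComplexOrder in
theorem stmt0 (H : ℝ) (hH0 : 0 < H) (hH1 : H ≤ 1) (n : ℕ)
    (t : Fin n → ℝ) (c : Fin n → ℂ) :
    0 ≤ ∑ j, ∑ k, c j * (starRingEnd ℂ) (c k) * (fbmKernel H (t j) (t k) : ℂ) := by
  have hψ := condNegDef_abs_rpow (α := 2 * H) (by positivity) (by linarith)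
  refine sum_mul_conj_mul_ofReal_nonneg (fun j k => ?_) (fun a => ?_) c
  · simp only [fbmKernel, abs_sub_comm (t j)]
    ring
  · have hkernel := hψ.sum_mul_mul_add_sub_nonneg (rpow_nonneg (abs_nonneg 0) _)
      (fun x => by rw [abs_neg]) t a
    simp only [fbmKernel, ← mul_div_assoc, ← sum_div]
    exact div_nonneg hkernel zero_le_two
end

section
/- For $1/2 < H < 1$, the coefficient $(-1)^{k-1}\binom{2H}{k}$ is negative for $k \geq 2$; in particular the function $\varphi(u) = 1 + u^{2H} - (1-u)^{2H}$ on $(0,1)$ is not of the form $\int_0^\infty u^\lambda\, d\mu(\lambda)$ for a positive measure $\mu$ (it is not completely monotone in the multiplicative sense), i.e., $\varphi$ fails to be a positive definite function on the multiplicative semigroup $((0,1),\cdot)$. -/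
open MeasureTheory

open Set Filter Topology

lemma part1' (H : ℝ) (hH : 1 / 2 < H) (hH1 : H < 1) :
    ∀ k : ℕ, 2 ≤ k → (-1 : ℝ) ^ (k - 1) *
      ((∏ i ∈ Finset.range k, (2*H - i)) / (Nat.factorial k)) < 0 := by
  have key : ∀ k : ℕ, 2 ≤ k → (-1 : ℝ) ^ (k - 1) * (∏ i ∈ Finset.range k, (2*H - i)) < 0 := by
    intro k hk
    induction k with
    | zero => omega
    | succ n ih =>
      rcases Nat.lt_or_ge n 2 with h2 | h2
      · interval_cases n
        · omega
        · simp [Finset.prod_range_succ]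
          nlinarith
      · have hn := ih h2
        have hfac : 2*H - n < 0 := by
          have : (2:ℝ) ≤ n := by exact_mod_cast h2
          nlinarith
        rw [Finset.prod_range_succ]
        have hs : n + 1 - 1 = (n - 1) + 1 := by omega
        rw [hs, pow_succ]
        nlinarith [hn, hfac]
  intro k hk
  have h := key k hk
  have hfp : (0:ℝ) < Nat.factorial k := by positivity
  rw [← mul_div_assoc]
  exact div_neg_of_neg_of_pos (by nlinarith) hfp


lemma hconv' {p : ℝ} (hp1 : 1 < p) : 0 < 2 + 2 * (3:ℝ)^p - 4 * (2:ℝ)^p := by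
  have h := (strictConvexOn_rpow hp1).2 (show (1:ℝ) ∈ Ici (0:ℝ) by norm_num)
    (show (3:ℝ) ∈ Ici (0:ℝ) by norm_num) (by norm_num)
    (show (0:ℝ) < 1/2 by norm_num) (show (0:ℝ) < 1/2 by norm_num) (by norm_num)
  simp only [Real.one_rpow, smul_eq_mul] at h
  have h2 : ((1:ℝ)/2 * 1 + 1/2 * 3) = 2 := by norm_num
  rw [h2] at h
  nlinarith

lemma main' {p : ℝ} (hp1 : 1 < p) (hp2 : p < 2) :
    ∃ t : ℝ, 0 < t ∧ t < 1 ∧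
      (1 + t^p - (1-t)^p) * (1 + (t^3)^p - (1-t^3)^p) < (1 + (t^2)^p - (1-t^2)^p)^2 := by
  set q : ℝ → ℝ := fun ε => (1-ε)^p with hq
  set B : ℝ → ℝ := fun ε => (2-ε)^p with hB
  set C : ℝ → ℝ := fun ε => (3-3*ε+ε^2)^p with hC
  set G : ℝ → ℝ := fun ε => -(q ε * (1 - q ε)^2 / ε^p) +
    ((1 + q ε) * C ε + (1 + (q ε)^3) - 2*(1 + (q ε)^2) * B ε + ε^p * ((B ε)^2 - C ε))
    with hG
  have hp0 : (0:ℝ) < p := by linarith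
  -- limits of components
  have hqlim : Tendsto q (𝓝[>] (0:ℝ)) (𝓝 1) := by
    have hc : ContinuousAt q 0 :=
      ContinuousAt.rpow_const (by fun_prop) (Or.inr (by linarith))
    have := hc.tendsto.mono_left (nhdsWithin_le_nhds (s := Ioi (0:ℝ)))
    simpa [hq, Real.one_rpow] using this
  have hBlim : Tendsto B (𝓝[>] (0:ℝ)) (𝓝 ((2:ℝ)^p)) := by
    have hc : ContinuousAt B 0 :=
      ContinuousAt.rpow_const (by fun_prop) (Or.inr (by linarith))
    simpa [hB] using hc.tendsto.mono_left (nhdsWithin_le_nhds (s := Ioi (0:ℝ)))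
  have hClim : Tendsto C (𝓝[>] (0:ℝ)) (𝓝 ((3:ℝ)^p)) := by
    have hc : ContinuousAt C 0 :=
      ContinuousAt.rpow_const (by fun_prop) (Or.inr (by linarith))
    simpa [hC] using hc.tendsto.mono_left (nhdsWithin_le_nhds (s := Ioi (0:ℝ)))
  have hElim : Tendsto (fun ε : ℝ => ε^p) (𝓝[>] (0:ℝ)) (𝓝 0) := by
    have : ContinuousAt (fun ε : ℝ => ε^p) 0 :=
      Real.continuousAt_rpow_const 0 p (Or.inr hp0.le)
    have h0 : (0:ℝ)^p = 0 := Real.zero_rpow hp0.ne'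
    have := this.tendsto.mono_left (nhdsWithin_le_nhds (s := Ioi (0:ℝ)))
    simpa [h0] using this
  -- first term tends to 0
  have hmem : Ioo (0:ℝ) 1 ∈ 𝓝[>] (0:ℝ) := Ioo_mem_nhdsGT_of_mem (by norm_num)
  have hT1 : Tendsto (fun ε => q ε * (1 - q ε)^2 / ε^p) (𝓝[>] (0:ℝ)) (𝓝 0) := by
    apply squeeze_zero' (g := fun ε => 4 * ε^(2-p))
    · filter_upwards [hmem] with ε hε
      have hε0 : (0:ℝ) < ε := hε.1
      have hq0 : 0 ≤ q ε := Real.rpow_nonneg (by linarith [hε.2]) p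
      positivity
    · filter_upwards [hmem] with ε hε
      obtain ⟨hε0, hε1⟩ := hε
      have hq1 : q ε ≤ 1 := Real.rpow_le_one (by linarith) (by linarith) hp0.le
      have hber : 1 - p*ε ≤ q ε := by
        have := one_add_mul_self_le_rpow_one_add (show (-1:ℝ) ≤ -ε by linarith) hp1.le
        simpa [hq, sub_eq_add_neg, mul_comm] using this
      have h1q : 0 ≤ 1 - q ε := by linarith
      have h2 : 1 - q ε ≤ 2*ε := by nlinarith
      have hq0 : 0 ≤ q ε := Real.rpow_nonneg (by linarith) p
      have hsq : (1 - q ε)^2 ≤ 4*ε^2 := by nlinarith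
      have hεp : (0:ℝ) < ε^p := Real.rpow_pos_of_pos hε0 p
      have step1 : q ε * (1 - q ε)^2 / ε^p ≤ 4*ε^2 / ε^p :=
        div_le_div_of_nonneg_right (by nlinarith) hεp.le
      have step2 : 4*ε^2 / ε^p = 4 * ε^(2-p) := by
        rw [show (ε:ℝ)^2 = ε^((2:ℕ):ℝ) from (Real.rpow_natCast ε 2).symm]
        rw [mul_div_assoc, ← Real.rpow_sub hε0]
        norm_num
      linarith [step1, step2 ▸ step1]
    · have : ContinuousAt (fun ε : ℝ => ε^(2-p)) 0 :=
        Real.continuousAt_rpow_const 0 (2-p) (Or.inr (by linarith))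
      have h0 : (0:ℝ)^(2-p) = 0 := Real.zero_rpow (by intro h; linarith [h]; )
      have := this.tendsto.mono_left (nhdsWithin_le_nhds (s := Ioi (0:ℝ)))
      rw [h0] at this
      simpa using (this.const_mul (4:ℝ))
  -- G tends to L
  have hL : Tendsto G (𝓝[>] (0:ℝ))
      (𝓝 (-0 + ((1+1) * (3:ℝ)^p + (1+1^3) - 2*(1+1^2)*(2:ℝ)^p + 0 * (((2:ℝ)^p)^2 - (3:ℝ)^p)))) := by
    exact (hT1.neg).add <| ((((hqlim.const_add 1).mul hClim).add
      ((hqlim.pow 3).const_add 1)).sub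
      (((hqlim.pow 2).const_add 1).const_mul 2 |>.mul hBlim)).add
      (hElim.mul ((hBlim.pow 2).sub hClim))
  have hLpos : (0:ℝ) < -0 + ((1+1) * (3:ℝ)^p + (1+1^3) - 2*(1+1^2)*(2:ℝ)^p + 0 * (((2:ℝ)^p)^2 - (3:ℝ)^p)) := by
    have := hconv' hp1
    ring_nf
    ring_nf at this
    linarith
  -- eventually G > 0, pick witness
  have hev : ∀ᶠ ε in 𝓝[>] (0:ℝ), 0 < G ε := hL.eventually (eventually_gt_nhds hLpos)
  obtain ⟨ε, hGε, hε⟩ := (hev.and hmem).exists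
  obtain ⟨hε0, hε1⟩ := hε
  refine ⟨1 - ε, by linarith, by linarith, ?_⟩
  -- the algebraic identity
  have hεp : (0:ℝ) < ε^p := Real.rpow_pos_of_pos hε0 p
  have key : (1 + ((1-ε)^2)^p - (1-(1-ε)^2)^p)^2
      - (1 + (1-ε)^p - (1-(1-ε))^p) * (1 + ((1-ε)^3)^p - (1-(1-ε)^3)^p)
      = ε^p * G ε := by
    have h1 : ((1-ε)^2 : ℝ)^p = (q ε)^2 := by
      rw [sq, sq, Real.mul_rpow (by linarith) (by linarith)]
    have h2 : ((1-ε)^3 : ℝ)^p = (q ε)^3 := by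
      rw [pow_succ, sq, Real.mul_rpow (by nlinarith) (by linarith),
        Real.mul_rpow (by linarith) (by linarith)]
      ring
    have h3 : (1-(1-ε)^2 : ℝ)^p = ε^p * B ε := by
      rw [show (1-(1-ε)^2 : ℝ) = ε * (2-ε) by ring,
        Real.mul_rpow hε0.le (by linarith)]
    have h4 : (1-(1-ε)^3 : ℝ)^p = ε^p * C ε := by
      rw [show (1-(1-ε)^3 : ℝ) = ε * (3-3*ε+ε^2) by ring,
        Real.mul_rpow hε0.le (by nlinarith)]
    have h5 : (1-(1-ε) : ℝ) = ε := by ring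
    rw [h1, h2, h3, h4, h5, hG]
    field_simp
    ring
  have : 0 < ε^p * G ε := mul_pos hεp hGε
  rw [← key] at this
  have h5 : (1-(1-ε) : ℝ) = ε := by ring
  nlinarith [this]

/-- Generalized binomial coefficient `x choose k` for real `x`. -/
noncomputable def gbinom (x : ℝ) (k : ℕ) : ℝ :=
  (∏ i ∈ Finset.range k, (x - i)) / (Nat.factorial k)

set_option maxHeartbeats 2000000 in
theorem stmt4 (H : ℝ) (hH : 1 / 2 < H) (hH1 : H < 1) :
    (∀ k : ℕ, 2 ≤ k → (-1 : ℝ) ^ (k - 1) * gbinom (2 * H) k < 0) ∧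
    ¬ (∃ μ : Measure ℝ, ∀ u ∈ Set.Ioo (0 : ℝ) 1,
        1 + u ^ (2 * H) - (1 - u) ^ (2 * H) = ∫ l in Set.Ici (0 : ℝ), u ^ l ∂μ) ∧
    ¬ (∀ (n : ℕ) (x : Fin n → ℝ), (∀ i, x i ∈ Set.Ioo (0 : ℝ) 1) → ∀ c : Fin n → ℝ,
        0 ≤ ∑ j, ∑ k, c j * c k *
          (1 + (x j * x k) ^ (2 * H) - (1 - x j * x k) ^ (2 * H))) := by
  set p : ℝ := 2 * H with hp
  have hp1 : 1 < p := by rw [hp]; linarith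
  have hp2 : p < 2 := by rw [hp]; linarith
  obtain ⟨t, ht0, ht1, hmain⟩ := main' hp1 hp2
  set s : ℝ := Real.sqrt t with hsdef
  set w : ℝ := t * s with hwdef
  have hs0 : 0 < s := Real.sqrt_pos.2 ht0
  have hss : s * s = t := Real.mul_self_sqrt ht0.le
  have hs1 : s < 1 := by nlinarith
  have hw0 : 0 < w := by positivity
  have hw1 : w < 1 := by nlinarith
  have hsw : s * w = t^2 := by
    calc s * (t * s) = t * (s * s) := by ring
    _ = t^2 := by rw [hss]; ring
  have hww : w * w = t^3 := by
    calc (t*s) * (t*s) = t^2 * (s * s) := by ring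
    _ = t^3 := by rw [hss]; ring
  have ht20 : 0 < t^2 := by positivity
  have ht21 : t^2 < 1 := by nlinarith
  have ht30 : 0 < t^3 := by positivity
  have ht31 : t^3 < 1 := by nlinarith
  have φpos : ∀ u : ℝ, 0 < u → u < 1 → 0 < 1 + u ^ p - (1 - u) ^ p := by
    intro u hu0 hu1
    have h1 : (1 - u) ^ p < 1 := Real.rpow_lt_one (by linarith) (by linarith) (by linarith)
    have h2 : 0 ≤ u ^ p := Real.rpow_nonneg hu0.le p
    linarith
  refine ⟨part1' H hH hH1, ?_, ?_⟩
  · rintro ⟨μ, hμ⟩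
    set ν := μ.restrict (Set.Ici (0:ℝ)) with hν
    have hint : ∀ u : ℝ, 0 < u → u < 1 → Integrable (fun l : ℝ => u ^ l) ν := by
      intro u hu0 hu1
      by_contra h
      have h2 := hμ u ⟨hu0, hu1⟩
      rw [integral_undef h] at h2
      have := φpos u hu0 hu1
      rw [hp] at h2; linarith
    have i1 := hint t ht0 ht1
    have i2 := hint (t^2) ht20 ht21
    have i3 := hint (t^3) ht30 ht31
    have r1 := hμ t ⟨ht0, ht1⟩
    have r2 := hμ (t^2) ⟨ht20, ht21⟩
    have r3 := hμ (t^3) ⟨ht30, ht31⟩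
    have hquad : ∀ r : ℝ, 0 ≤ (1 + t ^ p - (1 - t) ^ p) * (r * r) +
        (2 * (1 + (t^2) ^ p - (1 - t^2) ^ p)) * r + (1 + (t^3) ^ p - (1 - t^3) ^ p) := by
      intro r
      have hpt : (fun l : ℝ => (r * s ^ l + w ^ l) ^ 2)
          = fun l : ℝ => (r*r) * t ^ l + (2 * r) * (t^2) ^ l + (t^3) ^ l := by
        funext l
        have e1 : s ^ l * s ^ l = t ^ l := by
          rw [← Real.mul_rpow hs0.le hs0.le, hss]
        have e2 : s ^ l * w ^ l = (t^2) ^ l := by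
          rw [← Real.mul_rpow hs0.le hw0.le, hsw]
        have e3 : w ^ l * w ^ l = (t^3) ^ l := by
          rw [← Real.mul_rpow hw0.le hw0.le, hww]
        have expand : (r * s ^ l + w ^ l) ^ 2 =
            (r*r) * (s ^ l * s ^ l) + (2 * r) * (s ^ l * w ^ l) + w ^ l * w ^ l := by ring
        rw [expand, e1, e2, e3]
      have hnn : 0 ≤ ∫ l, (r * s ^ l + w ^ l) ^ 2 ∂ν :=
        integral_nonneg fun l => sq_nonneg _
      rw [hpt] at hnn
      have i12 : Integrable (fun l : ℝ => (r*r) * t ^ l + (2*r) * (t^2) ^ l) ν :=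
        (i1.const_mul _).add (i2.const_mul _)
      have ia : Integrable (fun l : ℝ => (r*r) * t ^ l) ν := i1.const_mul _
      have ib : Integrable (fun l : ℝ => (2*r) * (t^2) ^ l) ν := i2.const_mul _
      rw [integral_add i12 i3, integral_add ia ib,
        integral_const_mul, integral_const_mul] at hnn
      rw [hp] at r1 r2 r3
      rw [← r1, ← r2, ← r3] at hnn
      linarith
    have hd := discrim_le_zero hquad
    rw [discrim] at hd
    nlinarith [hd, hmain]
  · intro hC
    have h := hC 2 ![s, w] (by
      intro i
      fin_cases i <;> simp [Set.mem_Ioo] <;> constructor <;> assumption)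
      ![1 + (t^2) ^ p - (1 - t^2) ^ p, -(1 + t ^ p - (1 - t) ^ p)]
    simp only [Fin.sum_univ_two, Matrix.cons_val_zero, Matrix.cons_val_one, Matrix.head_cons] at h
    rw [hss, hsw, hww, show w * s = t^2 by rw [← hsw]; ring] at h
    have hφt := φpos t ht0 ht1
    set B := 1 + t ^ p - (1 - t) ^ p with hBd
    set A := 1 + (t^2) ^ p - (1 - t^2) ^ p with hAd
    set P3 := 1 + (t^3) ^ p - (1 - t^3) ^ p with hPd
    have hid : A * A * B + A * -B * A + (-B * A * A + -B * -B * P3)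
        = B * (B * P3 - A * A) := by ring
    have hneg : B * (B * P3 - A * A) < 0 :=
      mul_neg_of_pos_of_neg hφt (by nlinarith [hmain])
    rw [hid] at h
    linarith
end

section
/- Let $(U_t)_{t\in\mathbb{R}}$ be an orthogonal representation of $\mathbb{R}$ on a real Hilbert space $\mathcal{H}$ and $(\beta_t)_{t\in\mathbb{R}}$ a continuous 1-cocycle (i.e., $\beta_{s+t} = \beta_s + U_s \beta_t$) such that $\langle \beta_t, \beta_{-s}\rangle = 0$ for all $s,t > 0$. Then there exists $c \geq 0$ such that $\langle \beta_s, \beta_t\rangle = \frac{c}{2}(|s| + |t| - |s-t|)$ for all $s,t \in \mathbb{R}$. -/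
/-!
Write `f t = ‖β t‖²`. The cocycle identity gives `β t - β s = U s (β (t - s))`, so by polarization
`⟪β s, β t⟫ = (f s + f t - f (s - t)) / 2`, and it remains to show `f t = c |t|`. The identity
`β s = -U s (β (-s))` shows that `f` is even, and it turns `⟪β s, U s (β t)⟫` into `-⟪β (-s), β t⟫`,
which vanishes for `s, t ≥ 0`; expanding `‖β (s + t)‖² = ‖β s + U s (β t)‖²` then shows that `f` is
additive on `[0, ∞)`. A continuous function additive on `[0, ∞)` is linear there.
-/

open scoped RealInnerProductSpace

/-- The odd extension `x ↦ f x⁺ - f x⁻` is continuous and additive on all of `ℝ`, hence `ℝ`-linear. -/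
theorem eq_mul_of_continuous_of_add_of_nonneg {f : ℝ → ℝ} (hf : Continuous f)
    (hadd : ∀ s t, 0 ≤ s → 0 ≤ t → f (s + t) = f s + f t) {t : ℝ} (ht : 0 ≤ t) :
    f t = f 1 * t := by
  have hf0 : f 0 = 0 := by simpa using hadd 0 0 le_rfl le_rfl
  have hadd₃ : ∀ a b c, 0 ≤ a → 0 ≤ b → 0 ≤ c → f (a + b + c) = f a + f b + f c :=
    fun a b c ha hb hc => by rw [hadd _ _ (add_nonneg ha hb) hc, hadd _ _ ha hb]
  let g : ℝ →+ ℝ := AddMonoidHom.mk' (fun x => f x⁺ - f x⁻) fun x y => by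
    have hparts : (x + y)⁺ + x⁻ + y⁻ = (x + y)⁻ + x⁺ + y⁺ := by
      linarith [posPart_sub_negPart (x + y), posPart_sub_negPart x, posPart_sub_negPart y]
    have hf_parts := congrArg f hparts
    rw [hadd₃ _ _ _ (posPart_nonneg _) (negPart_nonneg _) (negPart_nonneg _),
      hadd₃ _ _ _ (negPart_nonneg _) (posPart_nonneg _) (posPart_nonneg _)] at hf_parts
    linarith
  have hg : Continuous g := (hf.comp continuous_posPart).sub (hf.comp continuous_negPart)
  have hg_nonneg : ∀ x, 0 ≤ x → g x = f x := fun x hx => by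
    simp [g, posPart_eq_self.2 hx, negPart_eq_zero.2 hx, hf0]
  have hlin := map_real_smul g hg t 1
  rwa [smul_eq_mul, mul_one, smul_eq_mul, hg_nonneg t ht, hg_nonneg 1 zero_le_one, mul_comm] at hlin

def IsCocycle {G H : Type*} [Add G] [SeminormedAddCommGroup H] [NormedSpace ℝ H]
    (U : G → H →ₗᵢ[ℝ] H) (β : G → H) : Prop :=
  ∀ s t, β (s + t) = β s + U s (β t)

namespace IsCocycle

section AddGroup

variable {G H : Type*} [AddGroup G] [NormedAddCommGroup H] [NormedSpace ℝ H]
  {U : G → H →ₗᵢ[ℝ] H} {β : G → H}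

theorem map_zero (h : IsCocycle U β) : β 0 = 0 := by
  have h00 := h 0 0
  rw [add_zero, left_eq_add, ← (U 0).map_zero] at h00
  exact (U 0).injective h00

theorem eq_neg_map_neg (h : IsCocycle U β) (s : G) : β s = -U s (β (-s)) := by
  have hs := h s (-s)
  rw [add_neg_cancel, h.map_zero] at hs
  exact eq_neg_of_add_eq_zero_left hs.symm

theorem norm_map_neg (h : IsCocycle U β) (s : G) : ‖β (-s)‖ = ‖β s‖ := by
  rw [h.eq_neg_map_neg s, norm_neg, LinearIsometry.norm_map]

theorem norm_sub (h : IsCocycle U β) (s t : G) : ‖β t - β s‖ = ‖β (-s + t)‖ := by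
  have hst := h s (-s + t)
  rw [add_neg_cancel_left] at hst
  rw [hst, add_sub_cancel_left, LinearIsometry.norm_map]

end AddGroup

section Real

variable {H : Type*} [NormedAddCommGroup H] [InnerProductSpace ℝ H]
  {U : ℝ → H →ₗᵢ[ℝ] H} {β : ℝ → H}

theorem inner_map_eq_neg_inner (h : IsCocycle U β) (s t : ℝ) :
    ⟪β s, U s (β t)⟫ = -⟪β (-s), β t⟫ := by
  rw [h.eq_neg_map_neg s, inner_neg_left, LinearIsometry.inner_map_map]

theorem norm_sq_add (h : IsCocycle U β)
    (horth : ∀ s t : ℝ, 0 < s → 0 < t → ⟪β t, β (-s)⟫ = 0) {s t : ℝ} (hs : 0 ≤ s) (ht : 0 ≤ t) :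
    ‖β (s + t)‖ ^ 2 = ‖β s‖ ^ 2 + ‖β t‖ ^ 2 := by
  have hpast_future : ⟪β (-s), β t⟫ = 0 := by
    rcases hs.eq_or_lt with rfl | hs
    · rw [neg_zero, h.map_zero, inner_zero_left]
    rcases ht.eq_or_lt with rfl | ht
    · rw [h.map_zero, inner_zero_right]
    rw [real_inner_comm, horth s t hs ht]
  rw [h s t, norm_add_sq_real, h.inner_map_eq_neg_inner, hpast_future, LinearIsometry.norm_map]
  ring

theorem norm_sq_eq_mul_abs (h : IsCocycle U β) (hβ : Continuous β)
    (horth : ∀ s t : ℝ, 0 < s → 0 < t → ⟪β t, β (-s)⟫ = 0) (t : ℝ) :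
    ‖β t‖ ^ 2 = ‖β 1‖ ^ 2 * |t| := by
  have hlin : ∀ t : ℝ, 0 ≤ t → ‖β t‖ ^ 2 = ‖β 1‖ ^ 2 * t := fun t ht =>
    eq_mul_of_continuous_of_add_of_nonneg (f := fun t => ‖β t‖ ^ 2) (by fun_prop)
      (fun _ _ => h.norm_sq_add horth) ht
  rcases le_total 0 t with ht | ht
  · rw [abs_of_nonneg ht, hlin t ht]
  · rw [abs_of_nonpos ht, ← h.norm_map_neg t, hlin (-t) (neg_nonneg.2 ht)]

end Real

end IsCocycle

theorem stmt9_general {H : Type*} [NormedAddCommGroup H] [InnerProductSpace ℝ H]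
    (U : ℝ → H →ₗᵢ[ℝ] H)
    (β : ℝ → H) (hβcont : Continuous β)
    (hcoc : ∀ s t : ℝ, β (s + t) = β s + U s (β t))
    (horth : ∀ s t : ℝ, 0 < s → 0 < t → ⟪β t, β (-s)⟫ = 0) :
    ∃ c : ℝ, 0 ≤ c ∧ ∀ s t : ℝ, ⟪β s, β t⟫ = c / 2 * (|s| + |t| - |s - t|) := by
  have hβ : IsCocycle U β := hcoc
  have hnorm_sq := hβ.norm_sq_eq_mul_abs hβcont horth
  refine ⟨‖β 1‖ ^ 2, sq_nonneg _, fun s t => ?_⟩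
  calc ⟪β s, β t⟫ = (‖β s‖ ^ 2 + ‖β t‖ ^ 2 - ‖β t - β s‖ ^ 2) / 2 := by
        rw [norm_sub_sq_real, real_inner_comm]
        ring
    _ = ‖β 1‖ ^ 2 / 2 * (|s| + |t| - |s - t|) := by
        rw [hβ.norm_sub, neg_add_eq_sub, hnorm_sq s, hnorm_sq t, hnorm_sq (t - s), abs_sub_comm]
        ring

theorem stmt9 {H : Type*} [NormedAddCommGroup H] [InnerProductSpace ℝ H]
    (U : ℝ → H →ₗᵢ[ℝ] H) (hU : ∀ s t : ℝ, U (s + t) = (U s).comp (U t))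
    (β : ℝ → H) (hβcont : Continuous β)
    (hcoc : ∀ s t : ℝ, β (s + t) = β s + U s (β t))
    (horth : ∀ s t : ℝ, 0 < s → 0 < t → ⟪β t, β (-s)⟫ = 0) :
    ∃ c : ℝ, 0 ≤ c ∧ ∀ s t : ℝ, ⟪β s, β t⟫ = c / 2 * (|s| + |t| - |s - t|) :=
  stmt9_general U β hβcont hcoc horth
end

section
/- For $0 < H < 1$ and $t \in \mathbb{R}$, $|t|^{2H} = \frac{\Gamma(2H+1)}{\Gamma(H)\Gamma(1-H)} \int_{\mathbb{R}} \frac{1 - \cos(\lambda t)}{|\lambda|^{2H+1}}\, d\lambda$. -/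
/-!
For `x > 0` the Gamma integral gives `Γ(a) x^(-a) = ∫₀^∞ s^(a-1) e^(-s x) ds`. Inserting this
and exchanging the integrals turns `Γ(a) ∫₀^∞ φ(x) x^(-a) dx` into `∫₀^∞ s^(a-1) (ℒφ)(s) ds`,
where `ℒ` is the Laplace transform. For `φ = 1 - cos` and `a = 2H + 1` we have
`ℒφ(s) = 1 / (s (s² + 1))`, and the substitution `u = s²` leaves `½ ∫₀^∞ u^(H-1) / (u + 1) du`.
The same exchange with `φ = e^(-x)` and `a = H` evaluates this last integral as `Γ(H) Γ(1 - H)`.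
The scaling `l ↦ l t` and the evenness of the integrand reduce the integral over `ℝ` to this
half-line integral.
-/

open Real MeasureTheory Set

lemma integrableOn_rpow_sub_one_mul_exp_neg_mul {a r : ℝ} (ha : 0 < a) (hr : 0 < r) :
    IntegrableOn (fun s : ℝ => s ^ (a - 1) * exp (-(r * s))) (Ioi 0) := by
  simpa [rpow_one, neg_mul] using
    integrableOn_rpow_mul_exp_neg_mul_rpow (s := a - 1) (by linarith) one_pos hr

theorem Gamma_mul_integral_div_rpow_eq_integral_laplace {φ : ℝ → ℝ} {a : ℝ} (ha : 0 < a)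
    (hφ : Measurable φ) (hint : IntegrableOn (fun x => φ x / x ^ a) (Ioi 0)) :
    Gamma a * ∫ x in Ioi 0, φ x / x ^ a =
      ∫ s in Ioi 0, s ^ (a - 1) * ∫ x in Ioi 0, exp (-(s * x)) * φ x := by
  set μ := volume.restrict (Ioi (0 : ℝ))
  let F : ℝ → ℝ → ℝ := fun x s => φ x * (s ^ (a - 1) * exp (-(x * s)))
  have hF_inner : ∀ x ∈ Ioi (0 : ℝ), ∫ s, F x s ∂μ = Gamma a * (φ x / x ^ a) := by
    intro x hx
    rw [integral_const_mul, integral_rpow_mul_exp_neg_mul_Ioi ha hx, one_div,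
      inv_rpow hx.le]
    ring
  have hF_int : Integrable (Function.uncurry F) (μ.prod μ) := by
    refine (integrable_prod_iff (by fun_prop)).2 ⟨?_, ?_⟩
    · filter_upwards [ae_restrict_mem measurableSet_Ioi] with x hx
      exact (integrableOn_rpow_sub_one_mul_exp_neg_mul ha hx).const_mul (φ x)
    · refine (hint.norm.const_mul (Gamma a)).congr ?_
      filter_upwards [ae_restrict_mem measurableSet_Ioi] with x (hx : 0 < x)
      have hnorm : ∀ᵐ s ∂μ,
          ‖Function.uncurry F (x, s)‖ = ‖φ x‖ * (s ^ (a - 1) * exp (-(x * s))) := by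
        filter_upwards [ae_restrict_mem measurableSet_Ioi] with s (hs : 0 < s)
        rw [Function.uncurry_apply_pair, norm_mul,
          norm_of_nonneg (by positivity : 0 ≤ s ^ (a - 1) * exp (-(x * s)))]
      rw [integral_congr_ae hnorm, integral_const_mul, integral_rpow_mul_exp_neg_mul_Ioi ha hx,
        norm_div, norm_of_nonneg (by positivity : 0 ≤ x ^ a), one_div, inv_rpow hx.le]
      ring
  calc Gamma a * ∫ x in Ioi 0, φ x / x ^ a = ∫ x, ∫ s, F x s ∂μ ∂μ := by
        rw [← integral_const_mul]
        exact setIntegral_congr_fun measurableSet_Ioi fun x hx => (hF_inner x hx).symm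
    _ = ∫ s, ∫ x, F x s ∂μ ∂μ := integral_integral_swap hF_int
    _ = _ := by
        refine integral_congr_ae (ae_of_all _ fun s => ?_)
        simp only [F]
        rw [← integral_const_mul]
        congr 1 with x
        rw [mul_comm x s]
        ring

lemma integral_exp_neg_mul_mul_exp_neg_Ioi {s : ℝ} (hs : 0 < s) :
    ∫ x in Ioi 0, exp (-(s * x)) * exp (-x) = 1 / (s + 1) := by
  have : ∀ x, exp (-(s * x)) * exp (-x) = exp (-(s + 1) * x) := by
    intro x
    rw [← exp_add]
    ring_nf
  simp_rw [this]
  rw [integral_exp_mul_Ioi (by linarith), mul_zero, exp_zero, neg_div_neg_eq]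

theorem integral_rpow_sub_one_div_add_one_Ioi {H : ℝ} (hH₀ : 0 < H) (hH₁ : H < 1) :
    ∫ u in Ioi 0, u ^ (H - 1) / (u + 1) = Gamma H * Gamma (1 - H) := by
  have hEq : EqOn (fun x => exp (-x) / x ^ H) (fun x => exp (-x) * x ^ ((1 - H) - 1)) (Ioi 0) :=
    fun x (hx : 0 < x) => by simp only [sub_sub_cancel_left, rpow_neg hx.le, div_eq_mul_inv]
  have hΓ := Gamma_mul_integral_div_rpow_eq_integral_laplace hH₀ (by fun_prop)
    ((GammaIntegral_convergent (sub_pos.2 hH₁)).congr_fun hEq.symm measurableSet_Ioi)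
  rw [setIntegral_congr_fun measurableSet_Ioi hEq, ← Gamma_eq_integral (sub_pos.2 hH₁)] at hΓ
  rw [hΓ]
  refine setIntegral_congr_fun measurableSet_Ioi fun s (hs : 0 < s) => ?_
  rw [integral_exp_neg_mul_mul_exp_neg_Ioi hs, mul_one_div]

lemma integral_rpow_two_mul_sub_one_div_sq_add_one_Ioi (c : ℝ) :
    ∫ s in Ioi (0 : ℝ), s ^ (2 * c - 1) / (s ^ 2 + 1) =
      (∫ u in Ioi (0 : ℝ), u ^ (c - 1) / (u + 1)) / 2 := by
  rw [← integral_comp_rpow_Ioi (fun u : ℝ => u ^ (c - 1) / (u + 1)) two_ne_zero, ← integral_div]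
  refine setIntegral_congr_fun measurableSet_Ioi fun s (hs : 0 < s) => ?_
  rw [smul_eq_mul, ← rpow_mul hs.le, rpow_two, show 2 * c - 1 = (2 - 1) + 2 * (c - 1) by ring,
    rpow_add hs, abs_two]
  ring

lemma integrableOn_one_sub_cos_div_rpow_Ioi {a : ℝ} (ha₁ : 1 < a) (ha₃ : a < 3) :
    IntegrableOn (fun x => (1 - cos x) / x ^ a) (Ioi 0) := by
  have hmeas : AEStronglyMeasurable (fun x : ℝ => (1 - cos x) / x ^ a) :=
    (by fun_prop : Measurable fun x : ℝ => (1 - cos x) / x ^ a).aestronglyMeasurable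
  rw [← Ioc_union_Ioi_eq_Ioi zero_le_one]
  refine IntegrableOn.union ?_ ?_
  · have hint : IntegrableOn (fun x : ℝ => x ^ (2 - a) / 2) (Ioc 0 1) := by
      have := intervalIntegral.intervalIntegrable_rpow' (a := 0) (b := 1) (r := 2 - a)
        (by linarith)
      exact ((intervalIntegrable_iff_integrableOn_Ioc_of_le zero_le_one).1 this).div_const 2
    refine hint.mono' hmeas.restrict ?_
    filter_upwards [ae_restrict_mem measurableSet_Ioc] with x hx
    obtain ⟨hx, -⟩ := hx
    have hcos : 1 - cos x ≤ x ^ 2 / 2 := by linarith [one_sub_sq_div_two_le_cos (x := x)]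
    rw [norm_of_nonneg (div_nonneg (by linarith [cos_le_one x]) (by positivity)),
      rpow_sub hx, rpow_two, div_div, div_le_div_iff₀ (by positivity) (by positivity)]
    nlinarith [rpow_pos_of_pos hx a]
  · have hint : IntegrableOn (fun x : ℝ => 2 * x ^ (-a)) (Ioi 1) :=
      (integrableOn_Ioi_rpow_of_lt (by linarith) one_pos).const_mul 2
    refine hint.mono' hmeas.restrict ?_
    filter_upwards [ae_restrict_mem measurableSet_Ioi] with x (hx : 1 < x)
    rw [norm_of_nonneg (div_nonneg (by linarith [cos_le_one x]) (by positivity)),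
      rpow_neg (by linarith), ← div_eq_mul_inv]
    gcongr
    linarith [neg_one_le_cos x]

lemma integral_exp_neg_mul_mul_one_sub_cos_Ioi {s : ℝ} (hs : 0 < s) :
    ∫ x in Ioi 0, exp (-(s * x)) * (1 - cos x) = 1 / (s * (s ^ 2 + 1)) := by
  have hre : ∀ x : ℝ, exp (-(s * x)) * (1 - cos x) =
      RCLike.re (Complex.exp (-s * x) - Complex.exp ((-s + Complex.I) * x)) := by
    intro x
    simp [Complex.exp_re, mul_sub]
  have h₁ : (-s : ℂ).re < 0 := by simpa using hs
  have h₂ : (-s + Complex.I).re < 0 := by simpa using hs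
  have hi₁ := integrableOn_exp_mul_complex_Ioi h₁ 0
  have hi₂ := integrableOn_exp_mul_complex_Ioi h₂ 0
  simp_rw [hre]
  rw [integral_re (f := fun x : ℝ => Complex.exp (-s * x) - Complex.exp ((-s + Complex.I) * x))
      (hi₁.sub hi₂), integral_sub hi₁ hi₂, integral_exp_mul_complex_Ioi h₁,
    integral_exp_mul_complex_Ioi h₂]
  norm_num [Complex.div_re, Complex.normSq]
  field_simp
  ring

theorem integral_one_sub_cos_div_rpow_Ioi {H : ℝ} (hH₀ : 0 < H) (hH₁ : H < 1) :
    ∫ x in Ioi 0, (1 - cos x) / x ^ (2 * H + 1) =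
      Gamma H * Gamma (1 - H) / (2 * Gamma (2 * H + 1)) := by
  have hΓ := Gamma_mul_integral_div_rpow_eq_integral_laplace (by linarith) (by fun_prop)
    (integrableOn_one_sub_cos_div_rpow_Ioi (a := 2 * H + 1) (by linarith) (by linarith))
  have hlaplace :
      ∫ s in Ioi 0, s ^ (2 * H + 1 - 1) * ∫ x in Ioi 0, exp (-(s * x)) * (1 - cos x) =
        ∫ s in Ioi 0, s ^ (2 * H - 1) / (s ^ 2 + 1) := by
    refine setIntegral_congr_fun measurableSet_Ioi fun s (hs : 0 < s) => ?_
    rw [integral_exp_neg_mul_mul_one_sub_cos_Ioi hs, add_sub_cancel_right,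
      rpow_sub_one hs.ne']
    field_simp
  rw [hlaplace, integral_rpow_two_mul_sub_one_div_sq_add_one_Ioi,
    integral_rpow_sub_one_div_add_one_Ioi hH₀ hH₁] at hΓ
  have := Gamma_pos_of_pos (by linarith : 0 < 2 * H + 1)
  field_simp
  linarith

lemma integral_comp_mul_div_abs_rpow (f : ℝ → ℝ) (a : ℝ) {t : ℝ} (ht : t ≠ 0) :
    ∫ l, f (l * t) / |l| ^ a = |t| ^ (a - 1) * ∫ l, f l / |l| ^ a := by
  have hta : |t| ^ a ≠ 0 := (rpow_pos_of_pos (abs_pos.2 ht) a).ne'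
  have : ∀ l, f (l * t) / |l| ^ a = |t| ^ a * (f (l * t) / |l * t| ^ a) := fun l => by
    rw [abs_mul, mul_rpow (abs_nonneg l) (abs_nonneg t), mul_div_assoc', mul_comm (|t| ^ a),
      mul_div_mul_right _ _ hta]
  simp_rw [this]
  rw [integral_const_mul, Measure.integral_comp_mul_right (fun y => f y / |y| ^ a), smul_eq_mul,
    abs_inv, ← mul_assoc, ← rpow_neg_one, ← rpow_add (abs_pos.2 ht), ← sub_eq_add_neg]

lemma integral_one_sub_cos_div_abs_rpow (a : ℝ) :
    ∫ l, (1 - cos l) / |l| ^ a = 2 * ∫ x in Ioi 0, (1 - cos x) / x ^ a := by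
  rw [← integral_comp_abs (f := fun x => (1 - cos x) / x ^ a)]
  simp_rw [cos_abs]

theorem stmt14 (H : ℝ) (hH0 : 0 < H) (hH1 : H < 1) (t : ℝ) :
    |t| ^ (2 * H) = Real.Gamma (2 * H + 1) / (Real.Gamma H * Real.Gamma (1 - H)) *
      ∫ l : ℝ, (1 - Real.cos (l * t)) / |l| ^ (2 * H + 1) := by
  rcases eq_or_ne t 0 with rfl | ht
  · simp [zero_rpow (by positivity : 2 * H ≠ 0)]
  rw [integral_comp_mul_div_abs_rpow (fun x => 1 - cos x) _ ht, add_sub_cancel_right,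
    integral_one_sub_cos_div_abs_rpow, integral_one_sub_cos_div_rpow_Ioi hH0 hH1]
  have := Gamma_pos_of_pos hH0
  have := Gamma_pos_of_pos (sub_pos.2 hH1)
  have := Gamma_pos_of_pos (by linarith : 0 < 2 * H + 1)
  field_simp
end

section
/- Let $\hat\theta$ be the isometric involution on $L^2((0,\infty))$ given by $(\hat\theta f)(t) = \int_0^{1/t} f(s)\,ds - \frac{1}{t} f(1/t)$. Then for every $f \in L^2((0,1))$ (extended by zero), $\langle f, \hat\theta f\rangle = \left|\int_0^1 f(x)\,dx\right|^2$; in particular $\langle f, \hat\theta f\rangle \geq 0$ on this subspace. -/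
/-!
On `(0, 1)` the term `t⁻¹ f(t⁻¹)` of `θ̂ f` vanishes, because `t⁻¹ > 1`, and the integral
`∫₀^{1/t} f` is the full mass `∫₀¹ f`; on `(1, ∞)` the factor `f t` vanishes. Hence
`f · θ̂ f = (∫₀¹ f) · f` almost everywhere on `(0, ∞)`, and integrating gives `(∫₀¹ f)²`.
-/

open MeasureTheory Set

noncomputable section

def thetaHat (f : ℝ → ℝ) (t : ℝ) : ℝ :=
  (∫ s in Ioc (0 : ℝ) t⁻¹, f s) - t⁻¹ * f t⁻¹

theorem setIntegral_Ioc_eq_of_eq_zero_of_lt {f : ℝ → ℝ} {a b c : ℝ}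
    (hsupp : ∀ x, c < x → f x = 0) (hcb : c ≤ b) :
    ∫ s in Ioc a b, f s = ∫ s in Ioc a c, f s := by
  calc ∫ s in Ioc a b, f s = ∫ s in Ioc a b, (Ioc a c).indicator f s := by
        refine setIntegral_congr_fun measurableSet_Ioc fun x hx => ?_
        by_cases hxc : x ≤ c
        · exact (indicator_of_mem (mem_Ioc.2 ⟨hx.1, hxc⟩) f).symm
        · rw [indicator_of_notMem (fun h => hxc h.2), hsupp x (not_le.1 hxc)]
    _ = ∫ s in Ioc a c, f s := by
        rw [setIntegral_indicator measurableSet_Ioc, Ioc_inter_Ioc, max_self,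
          min_eq_right hcb]

theorem thetaHat_eq_setIntegral_of_lt_one {f : ℝ → ℝ} (hsupp : ∀ x, 1 < x → f x = 0)
    {t : ℝ} (ht₀ : 0 < t) (ht₁ : t < 1) :
    thetaHat f t = ∫ x in Ioc (0 : ℝ) 1, f x := by
  have hinv : 1 < t⁻¹ := (one_lt_inv₀ ht₀).2 ht₁
  rw [thetaHat, hsupp _ hinv, mul_zero, sub_zero,
    setIntegral_Ioc_eq_of_eq_zero_of_lt hsupp hinv.le]

theorem mul_thetaHat_ae_eq {f : ℝ → ℝ} (hsupp : ∀ x, 1 < x → f x = 0) :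
    ∀ᵐ t ∂volume.restrict (Ioi (0 : ℝ)),
      f t * thetaHat f t = (∫ x in Ioc (0 : ℝ) 1, f x) * (Ioc (0 : ℝ) 1).indicator f t := by
  have hne : ∀ᵐ t : ℝ ∂volume, t ≠ 1 := compl_mem_ae_iff.2 (measure_singleton 1)
  rw [ae_restrict_iff' measurableSet_Ioi]
  filter_upwards [hne] with t ht₁ (ht₀ : 0 < t)
  rcases ht₁.lt_or_gt with hlt | hgt
  · rw [thetaHat_eq_setIntegral_of_lt_one hsupp ht₀ hlt, indicator_of_mem (mem_Ioc.2 ⟨ht₀, hlt.le⟩),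
      mul_comm]
  · rw [hsupp t hgt, indicator_of_notMem fun h => hgt.not_ge h.2, zero_mul, mul_zero]

end

theorem stmt18_general (f : ℝ → ℝ)
    (hsupp : ∀ x : ℝ, 1 < x → f x = 0) :
    (∫ t in Set.Ioi (0 : ℝ),
        f t * ((∫ s in Set.Ioc (0 : ℝ) t⁻¹, f s) - t⁻¹ * f t⁻¹))
      = (∫ x in Set.Ioc (0 : ℝ) 1, f x) ^ 2 ∧
    0 ≤ ∫ t in Set.Ioi (0 : ℝ),
        f t * ((∫ s in Set.Ioc (0 : ℝ) t⁻¹, f s) - t⁻¹ * f t⁻¹) := by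
  have key : ∫ t in Ioi (0 : ℝ), f t * thetaHat f t = (∫ x in Ioc (0 : ℝ) 1, f x) ^ 2 := by
    rw [integral_congr_ae (mul_thetaHat_ae_eq hsupp), integral_const_mul,
      setIntegral_indicator measurableSet_Ioc, inter_eq_right.2 Ioc_subset_Ioi_self, sq]
  exact ⟨key, key ▸ sq_nonneg _⟩

theorem stmt18 (f : ℝ → ℝ)
    (hf : MeasureTheory.MemLp f 2 (volume.restrict (Set.Ioi (0 : ℝ))))
    (hsupp : ∀ x : ℝ, 1 < x → f x = 0) :
    (∫ t in Set.Ioi (0 : ℝ),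
        f t * ((∫ s in Set.Ioc (0 : ℝ) t⁻¹, f s) - t⁻¹ * f t⁻¹))
      = (∫ x in Set.Ioc (0 : ℝ) 1, f x) ^ 2 ∧
    0 ≤ ∫ t in Set.Ioi (0 : ℝ),
        f t * ((∫ s in Set.Ioc (0 : ℝ) t⁻¹, f s) - t⁻¹ * f t⁻¹) :=
  stmt18_general f hsupp
end
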